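/- Let A be the n × n real matrix with A_{i,i−1} = 1 for 2 ≤ i ≤ n, A_{1,n} = −1, and all other entries 0. Then there exist (ñ+1)/2 linear subspaces E₁, …, E_{(ñ+1)/2} of ℝⁿ, each invariant under A, with dim E_k = 2 for k = 1, …, (ñ−1)/2 and dim E_{(ñ+1)/2} = 2 if n is even, 1 if n is odd, such that every nonzero ξ ∈ E_k lies in 𝒩 with N(ξ) = 2k − 1, and moreover, for all 1 ≤ i ≤ j ≤ (ñ+1)/2 and every nonzero vector ξ in W_{i,j} = E_i ⊕ ⋯ ⊕ E_j, one has 2i − 1 ≤ N_m(ξ) ≤ N_M(ξ) ≤ 2j − 1. -/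

import Mathlib

open Filter Topology

/-- δ₁ = −1 (index `0` in our 0-based indexing), δᵢ = 1 for the other indices. -/
def cyclicDelta (n : ℕ) [NeZero n] (i : Fin n) : ℝ := if i = 0 then -1 else 1

/-- The set Λ of vectors with all coordinates nonzero. -/
def cyclicLambda (n : ℕ) [NeZero n] : Set (Fin n → ℝ) := {x | ∀ i, x i ≠ 0}

/-- The integer valued Lyapunov function `N(x) = card {i : δᵢ xᵢ x_{i−1} < 0}`
(cyclic indices, `x₀ = xₙ`). -/
noncomputable def cyclicN (n : ℕ) [NeZero n] (x : Fin n → ℝ) : ℕ :=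
  Nat.card {i : Fin n // cyclicDelta n i * x i * x (i - 1) < 0}

/-- `N_m(x)`: the minimum of `N` over `U ∩ Λ` for all sufficiently small
neighborhoods `U` of `x`, i.e. the least value of `N` attained in every
neighborhood of `x` within `Λ`. -/
noncomputable def cyclicNm (n : ℕ) [NeZero n] (x : Fin n → ℝ) : ℕ :=
  sInf {k | ∃ᶠ y in 𝓝[cyclicLambda n] x, cyclicN n y = k}

/-- `N_M(x)`: the maximum of `N` over `U ∩ Λ` for all sufficiently small
neighborhoods `U` of `x`. -/
noncomputable def cyclicNM (n : ℕ) [NeZero n] (x : Fin n → ℝ) : ℕ :=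
  sSup {k | ∃ᶠ y in 𝓝[cyclicLambda n] x, cyclicN n y = k}

/-- The set 𝒩 on which `N` extends continuously. -/
def cyclicGood (n : ℕ) [NeZero n] : Set (Fin n → ℝ) :=
  {x | cyclicNm n x = cyclicNM n x}

/-- ñ = n if n is odd, n − 1 if n is even. -/
def ntilde (n : ℕ) : ℕ := if n % 2 = 1 then n else n - 1

/-- A linear cyclic negative feedback system: coefficients `diag t i = a_{ii}(t)`
and `sub t i = a_{i,i−1}(t)` (cyclically, `sub t 0 = a_{1,n}(t)`), all continuous,
with `a_{1,n}(t) < 0` and `a_{i,i−1}(t) > 0` for `i ≠ 1`. -/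
structure LinCNF (n : ℕ) [NeZero n] where
  diag : ℝ → Fin n → ℝ
  sub : ℝ → Fin n → ℝ
  cont_diag : ∀ i, Continuous fun t => diag t i
  cont_sub : ∀ i, Continuous fun t => sub t i
  sub_neg : ∀ t, sub t 0 < 0
  sub_pos : ∀ t (i : Fin n), i ≠ 0 → 0 < sub t i

/-- `x` is a solution of the linear system `ẋᵢ = a_{ii}(t)xᵢ + a_{i,i−1}(t)x_{i−1}`. -/
def LinCNF.IsSolution {n : ℕ} [NeZero n] (S : LinCNF n) (x : ℝ → Fin n → ℝ) : Prop :=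
  ∀ (t : ℝ) (i : Fin n),
    HasDerivAt (fun s => x s i) (S.diag t i * x t i + S.sub t i * x t (i - 1)) t

/-- `Φ` is the fundamental (matrix) solution, `Φ(0) = I`. -/
def LinCNF.IsFundamental {n : ℕ} [NeZero n] (S : LinCNF n)
    (Φ : ℝ → (Fin n → ℝ) →ₗ[ℝ] (Fin n → ℝ)) : Prop :=
  Φ 0 = LinearMap.id ∧ ∀ x₀ : Fin n → ℝ, S.IsSolution fun t => Φ t x₀

/-- The cone `K_h = {0} ∪ {x : N_M(x) ≤ 2h − 1}`. -/
def Kcone (n : ℕ) [NeZero n] (h : ℕ) : Set (Fin n → ℝ) :=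
  {0} ∪ {x | cyclicNM n x ≤ 2 * h - 1}

/-- The complementary cone `K^h = {0} ∪ {x : N_m(x) > 2h − 1}`. -/
def KconeUp (n : ℕ) [NeZero n] (h : ℕ) : Set (Fin n → ℝ) :=
  {0} ∪ {x | 2 * h - 1 < cyclicNm n x}

/-- The matrix with `A_{i,i−1} = 1` for `2 ≤ i ≤ n`, `A_{1,n} = −1`
(cyclically, the entry in row `i`, column `i − 1` is `δᵢ`) and all other
entries `0`. -/
def Amat (n : ℕ) [NeZero n] : Matrix (Fin n) (Fin n) ℝ :=
  fun i j => if j = i - 1 then cyclicDelta n i else 0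

/-!
Extend `x ∈ ℝⁿ` negacyclically to `ℤ`, i.e. `x (t + n) = -x t`. Then `A` acts as the shift
`t ↦ t - 1`, and `N x` is half the number of sign changes of the extension over one period
`[0, 2n)`. The shift is diagonalised by the characters `t ↦ ω ^ (μ t)` with `ω = e^{iπ/n}` and
`μ` odd, and `E_k` is spanned by the real and imaginary parts of the character with
`μ = 2k - 1`.

A nonzero sequence whose Fourier coefficients vanish for `|μ| < d` has at least `2d` sign
changes per period (a discrete Sturm–Hurwitz theorem): otherwise the product of the sines
`sin (π (t - c + 1/2) / 2n)` over its sign changes `c` is a trigonometric polynomial of degree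
`< d` with the same sign pattern, so its pairing with the sequence is both zero and positive.
Multiplying by `(-1) ^ t` shifts all frequencies by `n` and exchanges sign changes with
non-changes, which gives the upper bound. Finally, every `y ∈ Λ` close to `ξ` has the signs of
`ξ` on the support of `ξ`, so these bounds for `N y` pass to `N_m ξ` and `N_M ξ`.
-/

open Finset Complex
open scoped Real Fin.CommRing

noncomputable section

def rootNegOne (m : ℕ) : ℂ := exp (π * I / m)

lemma rootNegOne_ne_zero (m : ℕ) : rootNegOne m ≠ 0 := exp_ne_zero _

lemma rootNegOne_zpow (m : ℕ) (s : ℤ) : rootNegOne m ^ s = exp (s * (π * I / m)) :=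
  (exp_int_mul _ s).symm

lemma rootNegOne_isPrimitiveRoot {m : ℕ} (hm : 0 < m) :
    IsPrimitiveRoot (rootNegOne m) (2 * m) := by
  unfold rootNegOne
  convert Complex.isPrimitiveRoot_exp (2 * m) (by omega) using 2
  push_cast
  field_simp

lemma rootNegOne_pow_self {m : ℕ} (hm : 0 < m) : rootNegOne m ^ m = -1 := by
  have hm' : (m : ℂ) ≠ 0 := by exact_mod_cast hm.ne'
  rw [rootNegOne, ← exp_nat_mul, mul_div_cancel₀ _ hm', exp_pi_mul_I]

lemma rootNegOne_two_mul_sq (m : ℕ) : rootNegOne (2 * m) ^ 2 = rootNegOne m := by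
  rw [rootNegOne, rootNegOne, ← exp_nat_mul]
  push_cast
  ring_nf

lemma sum_range_rootNegOne_zpow_eq_zero {m : ℕ} (hm : 0 < m) {s : ℤ} (hs : ¬ (2 * m : ℤ) ∣ s) :
    ∑ t ∈ range (2 * m), rootNegOne m ^ (s * t) = 0 := by
  have hprim := rootNegOne_isPrimitiveRoot hm
  have hne : rootNegOne m ^ s ≠ 1 := by
    rwa [Ne, hprim.zpow_eq_one_iff_dvd, Nat.cast_mul, Nat.cast_ofNat]
  have hpow : (rootNegOne m ^ s) ^ (2 * m) = 1 := by
    rw [← zpow_natCast, ← zpow_mul, mul_comm, zpow_mul, zpow_natCast, hprim.pow_eq_one, one_zpow]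
  simp_rw [zpow_mul, zpow_natCast]
  rw [geom_sum_eq hne, hpow, sub_self, zero_div]

def freqCoeff (n : ℕ) (μ : ℤ) : (ℤ → ℝ) →ₗ[ℝ] ℂ where
  toFun ζ := ∑ t ∈ range (2 * n), (ζ t : ℂ) * rootNegOne n ^ (μ * t)
  map_add' ζ η := by simp only [Pi.add_apply, ofReal_add, add_mul, sum_add_distrib]
  map_smul' c ζ := by simp only [Pi.smul_apply, smul_eq_mul, ofReal_mul, mul_assoc, ← mul_sum,
    RingHom.id_apply, real_smul]

section SignChanges

def signChanges (σ : ℤ → ℝ) (m : ℕ) : Finset ℕ :=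
  (range m).filter fun t => σ t * σ (t - 1) < 0

lemma signChanges_subset (σ : ℤ → ℝ) (m : ℕ) : signChanges σ m ⊆ range m :=
  filter_subset _ _

lemma even_card_signChanges {σ : ℤ → ℝ} {m : ℕ} (hσ : ∀ t, σ t ≠ 0)
    (hper : Function.Periodic σ m) : Even #(signChanges σ m) := by
  classical
  let s : ℤ → ℤˣ := fun t => if 0 < σ t then 1 else -1
  have hratio : ∀ t : ℤ, s t / s (t - 1) = if σ t * σ (t - 1) < 0 then -1 else 1 := by
    intro t
    rcases (hσ t).lt_or_gt with h | h <;> rcases (hσ (t - 1)).lt_or_gt with h' | h' <;>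
      simp [s, h, h', h.not_gt, h'.not_gt, mul_neg_iff]
  have htele : ∏ t ∈ range m, s t / s (t - 1) = 1 := by
    have := prod_range_div (fun t : ℕ => s ((t : ℤ) - 1)) m
    push_cast at this
    simp only [add_sub_cancel_right] at this
    rw [this, show s (m - 1) = s (-1) by simp only [s, sub_eq_neg_add, hper (-1)], div_self']
  rw [prod_congr rfl fun (t : ℕ) _ => hratio t, prod_ite, prod_const, prod_const, one_pow, mul_one]
    at htele
  exact (neg_one_pow_eq_one_iff_even (by decide)).1 htele

end SignChanges

section SinProduct

variable {n : ℕ}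

lemma sin_shift_pos {t c : ℕ} (hct : c ≤ t) (ht : t < 2 * n) :
    0 < Real.sin (π * ((t : ℝ) - c + 1 / 2) / (2 * n)) := by
  have hct' : (c : ℝ) ≤ t := by exact_mod_cast hct
  have ht' : (t : ℝ) + 1 ≤ 2 * n := by exact_mod_cast ht
  apply Real.sin_pos_of_pos_of_lt_pi
  · exact div_pos (mul_pos Real.pi_pos (by linarith)) (by linarith)
  · rw [div_lt_iff₀ (by linarith)]
    nlinarith [Real.pi_pos]

lemma sin_shift_neg {t c : ℕ} (htc : t < c) (hc : c < 2 * n) :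
    Real.sin (π * ((t : ℝ) - c + 1 / 2) / (2 * n)) < 0 := by
  have htc' : (t : ℝ) + 1 ≤ c := by exact_mod_cast htc
  have hc' : (c : ℝ) + 1 ≤ 2 * n := by exact_mod_cast hc
  have ht : (0 : ℝ) ≤ t := t.cast_nonneg
  apply Real.sin_neg_of_neg_of_neg_pi_lt
  · apply div_neg_of_neg_of_pos _ (by linarith)
    nlinarith [Real.pi_pos]
  · rw [lt_div_iff₀ (by linarith)]
    nlinarith [Real.pi_pos]

/-- The test function of the Sturm–Hurwitz argument; the shift by `1 / 2` keeps its zeros off the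
integers. -/
def sinProd (n : ℕ) (C : Finset ℕ) (t : ℕ) : ℝ :=
  ∏ c ∈ C, Real.sin (π * ((t : ℝ) - c + 1 / 2) / (2 * n))

variable {C : Finset ℕ}

lemma sinProd_ne_zero (hC : ∀ c ∈ C, c < 2 * n) {t : ℕ} (ht : t < 2 * n) : sinProd n C t ≠ 0 :=
  prod_ne_zero_iff.2 fun c hc => by
    rcases le_or_gt c t with h | h
    · exact (sin_shift_pos h ht).ne'
    · exact (sin_shift_neg h (hC c hc)).ne

lemma sinProd_succ_mul_neg_iff (hC : ∀ c ∈ C, c < 2 * n) {t : ℕ} (ht : t + 1 < 2 * n) :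
    sinProd n C (t + 1) * sinProd n C t < 0 ↔ t + 1 ∈ C := by
  classical
  have hfac : ∀ c ∈ C, c ≠ t + 1 → 0 < Real.sin (π * (((t + 1 : ℕ) : ℝ) - c + 1 / 2) / (2 * n))
      * Real.sin (π * ((t : ℝ) - c + 1 / 2) / (2 * n)) := by
    intro c hc hct
    rcases le_or_gt c t with h | h
    · exact mul_pos (sin_shift_pos (by omega) ht) (sin_shift_pos h (by omega))
    · exact mul_pos_of_neg_of_neg (sin_shift_neg (by omega) (hC c hc)) (sin_shift_neg h (hC c hc))
  rw [sinProd, sinProd, ← prod_mul_distrib]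
  constructor
  · intro hneg
    by_contra hnot
    exact hneg.not_gt (prod_pos fun c hc => hfac c hc (ne_of_mem_of_not_mem hc hnot))
  · intro hmem
    rw [← mul_prod_erase _ _ hmem]
    refine mul_neg_of_neg_of_pos (mul_neg_of_pos_of_neg (sin_shift_pos le_rfl ht)
      (sin_shift_neg (Nat.lt_succ_self t) (hC _ hmem))) (prod_pos fun c hc => ?_)
    exact hfac c (mem_of_mem_erase hc) (ne_of_mem_erase hc)

end SinProduct

section Expansion

open Polynomial in
lemma prod_mul_add_mul_inv_eq_sum {ι K : Type*} [Field K] (s : Finset ι) (A B : ι → K) :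
    ∃ γ : ℕ → K, ∀ z ≠ 0, ∏ c ∈ s, (A c * z + B c * z⁻¹)
      = ∑ k ∈ range (#s + 1), γ k * z ^ (2 * (k : ℤ) - #s) := by
  set p : K[X] := ∏ c ∈ s, (C (A c) * X + C (B c))
  have hdeg : p.natDegree < #s + 1 :=
    Nat.lt_succ_of_le <| (natDegree_prod_le _ _).trans <|
      (sum_le_sum fun _ _ => natDegree_linear_le).trans (by simp)
  refine ⟨p.coeff, fun z hz => ?_⟩
  have hfac : ∀ c, A c * z + B c * z⁻¹ = z⁻¹ * (C (A c) * X + C (B c)).eval (z ^ 2) := by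
    intro c
    simp only [eval_add, eval_mul, eval_C, eval_X]
    field_simp
  rw [prod_congr rfl fun c _ => hfac c, prod_mul_distrib, prod_const, ← eval_prod,
    eval_eq_sum_range' hdeg, mul_sum]
  refine sum_congr rfl fun k _ => ?_
  rw [zpow_sub₀ hz, zpow_mul, zpow_natCast, zpow_natCast, zpow_ofNat, inv_pow]
  ring

variable {n : ℕ}

lemma ofReal_sinProd_eq_sum (hn : 0 < n) (C : Finset ℕ) :
    ∃ γ : ℕ → ℂ, ∀ t : ℕ, (sinProd n C t : ℂ)
      = ∑ k ∈ range (#C + 1), γ k * rootNegOne (2 * n) ^ ((2 * (k : ℤ) - #C) * t) := by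
  let a : ℕ → ℂ := fun c => exp (π * I * (1 / 2 - c) / (2 * n))
  obtain ⟨γ, hγ⟩ := prod_mul_add_mul_inv_eq_sum C (fun c => -I * a c / 2) (fun c => I * (a c)⁻¹ / 2)
  refine ⟨γ, fun t => ?_⟩
  set z := rootNegOne (2 * n) ^ t
  have hz : z ≠ 0 := pow_ne_zero _ (rootNegOne_ne_zero _)
  have hsin : ∀ c : ℕ, (Real.sin (π * ((t : ℝ) - c + 1 / 2) / (2 * n)) : ℂ)
      = -I * a c / 2 * z + I * (a c)⁻¹ / 2 * z⁻¹ := by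
    intro c
    have hn' : (n : ℂ) ≠ 0 := by exact_mod_cast hn.ne'
    have hexp : exp ((π * ((t : ℝ) - c + 1 / 2) / (2 * n) : ℝ) * I) = a c * z := by
      rw [show z = exp (t * (π * I / ↑(2 * n))) from (exp_nat_mul _ t).symm, ← exp_add]
      congr 1
      push_cast
      field_simp
      ring
    rw [ofReal_sin, Complex.sin, neg_mul, exp_neg, hexp, mul_inv]
    ring
  rw [sinProd, ofReal_prod, prod_congr rfl fun c _ => hsin c, hγ z hz]
  simp only [z, ← zpow_natCast, ← zpow_mul, mul_comm (t : ℤ)]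

variable {ζ : ℤ → ℝ}

lemma sum_mul_sinProd_eq_zero (hn : 0 < n) {C : Finset ℕ} {v : ℕ} (hv : #C = v + v)
    (hζ : ∀ μ : ℤ, |μ| ≤ v → freqCoeff n μ ζ = 0) :
    ∑ t ∈ range (2 * n), ζ t * sinProd n C t = 0 := by
  obtain ⟨γ, hγ⟩ := ofReal_sinProd_eq_sum hn C
  have hexp : ∀ (k : ℕ) (t : ℕ), rootNegOne (2 * n) ^ ((2 * (k : ℤ) - #C) * t)
      = rootNegOne n ^ ((k - v : ℤ) * t) := by
    intro k t
    rw [hv, ← rootNegOne_two_mul_sq n, ← zpow_natCast _ 2, ← zpow_mul]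
    congr 1
    push_cast
    ring
  suffices h : (∑ t ∈ range (2 * n), ζ t * sinProd n C t : ℂ) = 0 by exact_mod_cast h
  calc (∑ t ∈ range (2 * n), ζ t * sinProd n C t : ℂ)
      = ∑ k ∈ range (#C + 1), γ k * freqCoeff n (k - v) ζ := by
        simp only [freqCoeff, LinearMap.coe_mk, AddHom.coe_mk, hγ, hexp, mul_sum]
        rw [sum_comm]
        exact sum_congr rfl fun k _ => sum_congr rfl fun t _ => by ring
    _ = 0 := sum_eq_zero fun k hk => by
        rw [hζ _ (abs_le.2 ⟨by omega, by have := mem_range.1 hk; omega⟩), mul_zero]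

end Expansion

lemma mul_pos_of_forall_succ_mul_pos {f : ℕ → ℝ} {m : ℕ} (h0 : f 0 ≠ 0)
    (hstep : ∀ t, t + 1 < m → 0 < f (t + 1) * f t) : ∀ t < m, 0 < f t * f 0
  | 0, _ => mul_self_pos.2 h0
  | t + 1, ht => by
    have key : f (t + 1) * f 0 * f t ^ 2 = (f (t + 1) * f t) * (f t * f 0) := by ring
    exact pos_of_mul_pos_left (key ▸ mul_pos (hstep t ht)
      (mul_pos_of_forall_succ_mul_pos h0 hstep t (by omega))) (sq_nonneg _)

/-- Discrete Sturm–Hurwitz theorem. The nonvanishing `σ` is a sign pattern compatible with `ζ`;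
it decides the sign at the zeros of `ζ`. -/
theorem two_mul_le_card_signChanges {n : ℕ} (hn : 0 < n) {ζ σ : ℤ → ℝ} (hσ : ∀ t, σ t ≠ 0)
    (hper : Function.Periodic σ (2 * n)) (hζσ : ∀ t, 0 ≤ ζ t * σ t) {t₀ : ℕ} (ht₀ : t₀ < 2 * n)
    (hζt₀ : ζ t₀ ≠ 0) {d : ℕ} (hζ : ∀ μ : ℤ, |μ| < d → freqCoeff n μ ζ = 0) :
    2 * d ≤ #(signChanges σ (2 * n)) := by
  by_contra! hlt
  set C := signChanges σ (2 * n)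
  obtain ⟨v, hv⟩ : Even #C := even_card_signChanges hσ (by exact_mod_cast hper)
  have hC : ∀ c ∈ C, c < 2 * n := fun c hc => mem_range.1 (signChanges_subset _ _ hc)
  set T := sinProd n C
  -- `T` changes sign exactly where `σ` does, so `T σ` has constant sign on `[0, 2n)`.
  have hsame : ∀ t < 2 * n, 0 < (T t * σ t) * (T 0 * σ 0) := by
    refine mul_pos_of_forall_succ_mul_pos (mul_ne_zero (sinProd_ne_zero hC (by omega)) (hσ 0))
      fun t ht => ?_
    have hT := sinProd_succ_mul_neg_iff hC ht
    have hσt : σ (t + 1 : ℕ) * σ t < 0 ↔ t + 1 ∈ C := by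
      simp [C, signChanges, ht]
    have hTne : T (t + 1) * T t ≠ 0 :=
      mul_ne_zero (sinProd_ne_zero hC ht) (sinProd_ne_zero hC (by omega))
    have hσne : σ (t + 1 : ℕ) * σ t ≠ 0 := mul_ne_zero (hσ _) (hσ _)
    rw [show T (t + 1) * σ (t + 1 : ℕ) * (T t * σ t) = (T (t + 1) * T t) * (σ (t + 1 : ℕ) * σ t)
      by ring]
    rcases hTne.lt_or_gt with h | h
    · exact mul_pos_of_neg_of_neg h (hσt.2 (hT.1 h))
    · exact mul_pos h (lt_of_le_of_ne (not_lt.1 fun h' => (hT.2 (hσt.1 h')).not_gt h) hσne.symm)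
  have hterm : ∀ t < 2 * n,
      0 ≤ ζ t * T t * (T 0 * σ 0) ∧ (ζ t ≠ 0 → 0 < ζ t * T t * (T 0 * σ 0)) := by
    intro t ht
    have hσ2 : 0 < σ t ^ 2 := by positivity [hσ t]
    have key : ζ t * T t * (T 0 * σ 0) * σ t ^ 2 = (ζ t * σ t) * ((T t * σ t) * (T 0 * σ 0)) := by
      ring
    refine ⟨nonneg_of_mul_nonneg_left (key ▸ mul_nonneg (hζσ t) (hsame t ht).le) hσ2,
      fun hζt => pos_of_mul_pos_left (key ▸ mul_pos ?_ (hsame t ht)) hσ2.le⟩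
    exact lt_of_le_of_ne (hζσ t) (mul_ne_zero hζt (hσ t)).symm
  have hpos : 0 < ∑ t ∈ range (2 * n), ζ t * T t * (T 0 * σ 0) :=
    sum_pos' (fun t ht => (hterm t (mem_range.1 ht)).1)
      ⟨t₀, mem_range.2 ht₀, (hterm t₀ ht₀).2 hζt₀⟩
  rw [← sum_mul, sum_mul_sinProd_eq_zero hn hv fun μ hμ => hζ μ (by omega),
    zero_mul] at hpos
  exact hpos.false

section Negacyclic

variable {n : ℕ} [NeZero n]

def negacyclicExt (n : ℕ) [NeZero n] : (Fin n → ℝ) →ₗ[ℝ] ℤ → ℝ where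
  toFun x t := (-1) ^ (t / n) * x t
  map_add' x y := by funext t; simp [mul_add]
  map_smul' c x := by funext t; simp only [Pi.smul_apply, smul_eq_mul, RingHom.id_apply]; ring

lemma negacyclicExt_apply (x : Fin n → ℝ) (t : ℤ) :
    negacyclicExt n x t = (-1) ^ (t / n) * x t := rfl

lemma negacyclicExt_antiperiodic (x : Fin n → ℝ) :
    Function.Antiperiodic (negacyclicExt n x) n := by
  intro t
  have hn : (n : ℤ) ≠ 0 := by exact_mod_cast NeZero.ne n
  rw [negacyclicExt_apply, negacyclicExt_apply, Int.add_ediv_of_dvd_right dvd_rfl,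
    Int.ediv_self hn, zpow_add₀ (by norm_num), zpow_one, Int.cast_add, Int.cast_natCast,
    Fin.natCast_self, add_zero, mul_neg_one, neg_mul]

lemma negacyclicExt_mul_negacyclicExt (x y : Fin n → ℝ) (t : ℤ) :
    negacyclicExt n x t * negacyclicExt n y t = x t * y t := by
  rw [negacyclicExt_apply, negacyclicExt_apply, mul_mul_mul_comm, ← zpow_add₀ (by norm_num),
    ← two_mul, zpow_mul]
  norm_num

lemma negacyclicExt_ne_zero_iff (x : Fin n → ℝ) (t : ℤ) : negacyclicExt n x t ≠ 0 ↔ x t ≠ 0 := by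
  rw [negacyclicExt_apply, mul_ne_zero_iff]
  exact and_iff_right (zpow_ne_zero _ (by norm_num))

lemma negacyclicExt_natCast (x : Fin n → ℝ) (i : Fin n) : negacyclicExt n x (i : ℕ) = x i := by
  rw [negacyclicExt_apply, Int.ediv_eq_zero_of_lt (by positivity) (by exact_mod_cast i.isLt)]
  simp

lemma negacyclicExt_natCast_sub_one (x : Fin n → ℝ) (i : Fin n) :
    negacyclicExt n x ((i : ℕ) - 1) = cyclicDelta n i * x (i - 1) := by
  have hn : 0 < (n : ℤ) := by exact_mod_cast Nat.pos_of_ne_zero (NeZero.ne n)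
  have hi : ((i : ℕ) : ℤ) < n := by exact_mod_cast i.isLt
  rw [negacyclicExt_apply, cyclicDelta]
  push_cast
  congr 1
  split_ifs with h
  · subst h
    rw [show (((0 : Fin n) : ℕ) : ℤ) = 0 by simp]
    have : (-1 : ℤ) / n = -1 :=
      ((Int.ediv_emod_unique (r := n - 1) hn).2 ⟨by ring, by omega, by omega⟩).1
    simp [this]
  · have h1 : 1 ≤ (i : ℕ) := Nat.one_le_iff_ne_zero.2 (Fin.val_ne_zero_iff.2 h)
    rw [Int.ediv_eq_zero_of_lt (by omega) (by omega), zpow_zero]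

lemma mulVec_Amat_apply (x : Fin n → ℝ) (i : Fin n) :
    (Amat n).mulVec x i = cyclicDelta n i * x (i - 1) := by
  simp [Amat, Matrix.mulVec, dotProduct, ite_mul]

lemma cyclicN_eq_sum (x : Fin n → ℝ) :
    cyclicN n x = ∑ i : Fin n, if cyclicDelta n i * x i * x (i - 1) < 0 then 1 else 0 := by
  classical
  rw [cyclicN, Nat.card_eq_fintype_card, Fintype.card_subtype, card_filter]

lemma card_signChanges_negacyclicExt (x : Fin n → ℝ) :
    #(signChanges (negacyclicExt n x) (2 * n)) = 2 * cyclicN n x := by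
  set σ := negacyclicExt n x
  have hshift : ∀ t : ℕ, σ (n + t : ℕ) * σ ((n + t : ℕ) - 1) = σ t * σ (t - 1) := by
    intro t
    have h : Function.Antiperiodic σ n := negacyclicExt_antiperiodic x
    rw [Nat.cast_add, add_comm, h, add_sub_right_comm, h, neg_mul_neg]
  have hfirst : (∑ t ∈ range n, if σ t * σ (t - 1) < 0 then 1 else 0) = cyclicN n x := by
    rw [cyclicN_eq_sum, ← Fin.sum_univ_eq_sum_range]
    refine sum_congr rfl fun i _ => ?_
    simp only [σ, negacyclicExt_natCast, negacyclicExt_natCast_sub_one]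
    rw [mul_left_comm, mul_assoc]
  rw [signChanges, card_filter, two_mul, sum_range_add]
  simp only [hshift, hfirst, two_mul]

end Negacyclic

section Alternate

def alternate (ζ : ℤ → ℝ) (t : ℤ) : ℝ := (-1) ^ t * ζ t

variable {ζ σ : ℤ → ℝ}

lemma alternate_ne_zero {t : ℤ} (h : ζ t ≠ 0) : alternate ζ t ≠ 0 :=
  mul_ne_zero (zpow_ne_zero _ (by norm_num)) h

lemma alternate_mul_alternate (t : ℤ) : alternate ζ t * alternate σ t = ζ t * σ t := by
  rw [alternate, alternate, mul_mul_mul_comm, ← zpow_add₀ (by norm_num), ← two_mul, zpow_mul]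
  norm_num

lemma Function.Periodic.alternate {m : ℕ} (h : Function.Periodic σ (2 * m)) :
    Function.Periodic (alternate σ) (2 * m) := fun t => by
  rw [_root_.alternate, _root_.alternate, h, zpow_add₀ (by norm_num), zpow_mul]
  norm_num

lemma signChanges_alternate (hσ : ∀ t, σ t ≠ 0) (m : ℕ) :
    signChanges (alternate σ) m = range m \ signChanges σ m := by
  ext t
  have hsign : (-1 : ℝ) ^ (t : ℤ) * (-1) ^ ((t : ℤ) - 1) = -1 := by
    rw [← zpow_add₀ (by norm_num)]
    exact Odd.neg_one_zpow ⟨t - 1, by ring⟩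
  have hne := mul_ne_zero (hσ t) (hσ (t - 1))
  have : alternate σ t * alternate σ (t - 1) = -(σ t * σ (t - 1)) := by
    rw [alternate, alternate]
    linear_combination (σ t * σ (t - 1)) * hsign
  rw [Finset.mem_sdiff]
  simp only [signChanges, mem_filter, this, neg_lt_zero, not_and, not_lt]
  exact ⟨fun h => ⟨h.1, fun _ => h.2.le⟩, fun h => ⟨h.1, lt_of_le_of_ne (h.2 h.1) hne.symm⟩⟩

lemma freqCoeff_alternate {n : ℕ} (hn : 0 < n) (μ : ℤ) (ζ : ℤ → ℝ) :
    freqCoeff n μ (alternate ζ) = freqCoeff n (μ + n) ζ := by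
  simp only [freqCoeff, LinearMap.coe_mk, AddHom.coe_mk, alternate]
  refine sum_congr rfl fun t _ => ?_
  rw [add_mul, zpow_add₀ (rootNegOne_ne_zero n), zpow_mul _ (n : ℤ), zpow_natCast (rootNegOne n),
    rootNegOne_pow_self hn]
  push_cast
  ring

end Alternate

section Bounds

variable {n : ℕ} [NeZero n]

def vanishingFreq (n : ℕ) [NeZero n] (B : Set ℤ) : Submodule ℝ (Fin n → ℝ) :=
  ⨅ μ ∈ B, LinearMap.ker (freqCoeff n μ ∘ₗ negacyclicExt n)

lemma mem_vanishingFreq {B : Set ℤ} {x : Fin n → ℝ} :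
    x ∈ vanishingFreq n B ↔ ∀ μ ∈ B, freqCoeff n μ (negacyclicExt n x) = 0 := by
  simp [vanishingFreq]

variable {d : ℕ} {ξ y : Fin n → ℝ}

theorem le_cyclicN_of_mem_vanishingFreq (hξ : ξ ∈ vanishingFreq n {μ | |μ| < d}) (hξ0 : ξ ≠ 0)
    (hy : y ∈ cyclicLambda n) (hξy : ∀ i, 0 ≤ ξ i * y i) : d ≤ cyclicN n y := by
  have hn : 0 < n := Nat.pos_of_ne_zero (NeZero.ne n)
  obtain ⟨i, hi⟩ := Function.ne_iff.1 hξ0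
  have h := two_mul_le_card_signChanges hn (ζ := negacyclicExt n ξ) (σ := negacyclicExt n y)
    (fun t => (negacyclicExt_ne_zero_iff y t).2 (hy _))
    (negacyclicExt_antiperiodic y).periodic_two_mul
    (fun t => by rw [negacyclicExt_mul_negacyclicExt]; exact hξy _)
    (t₀ := i) (by omega) (by rwa [negacyclicExt_natCast]) (mem_vanishingFreq.1 hξ)
  rw [card_signChanges_negacyclicExt] at h
  omega

theorem cyclicN_add_le_of_mem_vanishingFreq (hξ : ξ ∈ vanishingFreq n {μ | |μ - n| < d})
    (hξ0 : ξ ≠ 0) (hy : y ∈ cyclicLambda n) (hξy : ∀ i, 0 ≤ ξ i * y i) :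
    cyclicN n y + d ≤ n := by
  have hn : 0 < n := Nat.pos_of_ne_zero (NeZero.ne n)
  obtain ⟨i, hi⟩ := Function.ne_iff.1 hξ0
  have hσ : ∀ t, negacyclicExt n y t ≠ 0 := fun t => (negacyclicExt_ne_zero_iff y t).2 (hy _)
  have h := two_mul_le_card_signChanges hn (ζ := alternate (negacyclicExt n ξ))
    (σ := alternate (negacyclicExt n y)) (fun t => alternate_ne_zero (hσ t))
    (negacyclicExt_antiperiodic y).periodic_two_mul.alternate
    (fun t => by rw [alternate_mul_alternate, negacyclicExt_mul_negacyclicExt]; exact hξy _)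
    (t₀ := i) (by omega) (alternate_ne_zero (by rwa [negacyclicExt_natCast]))
    fun μ hμ => by
      rw [freqCoeff_alternate hn]
      exact mem_vanishingFreq.1 hξ _ (by simpa using hμ)
  have hle := card_le_card (signChanges_subset (negacyclicExt n y) (2 * n))
  rw [signChanges_alternate hσ, card_sdiff_of_subset (signChanges_subset _ _), card_range] at h
  rw [card_range] at hle
  rw [card_signChanges_negacyclicExt] at h hle
  omega

end Bounds

section Modes

variable {n : ℕ} [NeZero n]

lemma negacyclicExt_eq_of_antiperiodic {g : ℤ → ℝ} (hg : Function.Antiperiodic g n)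
    {x : Fin n → ℝ} (hx : ∀ i : Fin n, x i = g (i : ℕ)) : negacyclicExt n x = g := by
  funext t
  have hn : (0 : ℤ) < n := by exact_mod_cast Nat.pos_of_ne_zero (NeZero.ne n)
  have hr : x t = g (t % n) := by
    rw [hx, Fin.val_intCast, Int.toNat_of_nonneg (Int.emod_nonneg _ hn.ne')]
  have h := hg.add_int_mul_eq (x := t % n) (t / n)
  rw [Int.cast_id, Int.emod_add_ediv_mul, Int.cast_negOnePow] at h
  rw [negacyclicExt_apply, hr, h]

def modeAngle (n k : ℕ) : ℝ := π * (2 * k + 1) / n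

def cosVec (n k : ℕ) : Fin n → ℝ := fun i => Real.cos (modeAngle n k * i)

def sinVec (n k : ℕ) : Fin n → ℝ := fun i => Real.sin (modeAngle n k * i)

lemma antiperiodic_comp_modeAngle_mul {f : ℝ → ℝ} (hf : Function.Antiperiodic f π) (k : ℕ) :
    Function.Antiperiodic (fun t : ℤ => f (modeAngle n k * t)) n := by
  intro t
  have hn : (n : ℝ) ≠ 0 := by exact_mod_cast NeZero.ne n
  have h : modeAngle n k * ((t + n : ℤ) : ℝ) = modeAngle n k * t + ((k : ℤ) * (2 * π) + π) := by
    rw [modeAngle]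
    push_cast
    field_simp
  simp only [h, hf.int_odd_mul_antiperiodic k _]

lemma negacyclicExt_cosVec (k : ℕ) :
    negacyclicExt n (cosVec n k) = fun t : ℤ => Real.cos (modeAngle n k * t) :=
  negacyclicExt_eq_of_antiperiodic (antiperiodic_comp_modeAngle_mul Real.cos_antiperiodic k)
    fun i => by simp [cosVec]

lemma negacyclicExt_sinVec (k : ℕ) :
    negacyclicExt n (sinVec n k) = fun t : ℤ => Real.sin (modeAngle n k * t) :=
  negacyclicExt_eq_of_antiperiodic (antiperiodic_comp_modeAngle_mul Real.sin_antiperiodic k)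
    fun i => by simp [sinVec]

lemma mulVec_Amat_cosVec (k : ℕ) : (Amat n).mulVec (cosVec n k)
    = Real.cos (modeAngle n k) • cosVec n k + Real.sin (modeAngle n k) • sinVec n k := by
  funext i
  rw [mulVec_Amat_apply, ← negacyclicExt_natCast_sub_one, negacyclicExt_cosVec]
  simp only [cosVec, sinVec, Pi.add_apply, Pi.smul_apply, smul_eq_mul, Int.cast_sub,
    Int.cast_natCast, Int.cast_one, mul_sub, mul_one, Real.cos_sub]
  ring

lemma mulVec_Amat_sinVec (k : ℕ) : (Amat n).mulVec (sinVec n k)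
    = Real.cos (modeAngle n k) • sinVec n k - Real.sin (modeAngle n k) • cosVec n k := by
  funext i
  rw [mulVec_Amat_apply, ← negacyclicExt_natCast_sub_one, negacyclicExt_sinVec]
  simp only [cosVec, sinVec, Pi.sub_apply, Pi.smul_apply, smul_eq_mul, Int.cast_sub,
    Int.cast_natCast, Int.cast_one, mul_sub, mul_one, Real.sin_sub]
  ring

/-- The space `E_{k+1}` of the statement: the real eigenspace of `Amat n` for the eigenvalues
`e^{± i modeAngle n k}`. -/
def modeSpace (n : ℕ) [NeZero n] (k : ℕ) : Submodule ℝ (Fin n → ℝ) :=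
  Submodule.span ℝ {cosVec n k, sinVec n k}

lemma mulVec_Amat_mem_modeSpace {k : ℕ} {x : Fin n → ℝ} (hx : x ∈ modeSpace n k) :
    (Amat n).mulVec x ∈ modeSpace n k := by
  obtain ⟨a, b, rfl⟩ := Submodule.mem_span_pair.1 hx
  rw [Matrix.mulVec_add, Matrix.mulVec_smul, Matrix.mulVec_smul, mulVec_Amat_cosVec,
    mulVec_Amat_sinVec]
  refine Submodule.mem_span_pair.2 ⟨a * Real.cos (modeAngle n k) - b * Real.sin (modeAngle n k),
    a * Real.sin (modeAngle n k) + b * Real.cos (modeAngle n k), ?_⟩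
  module

lemma finrank_modeSpace_of_lt {k : ℕ} (hk : 2 * k + 1 < n) :
    Module.finrank ℝ (modeSpace n k) = 2 := by
  have hsin : Real.sin (modeAngle n k) ≠ 0 := by
    have hn : (0 : ℝ) < n := by exact_mod_cast Nat.pos_of_ne_zero (NeZero.ne n)
    have hk' : (2 * k + 1 : ℝ) < n := by exact_mod_cast hk
    refine (Real.sin_pos_of_pos_of_lt_pi (by unfold modeAngle; positivity) ?_).ne'
    rw [modeAngle, div_lt_iff₀ hn]
    nlinarith [Real.pi_pos]
  have hli : LinearIndependent ℝ ![cosVec n k, sinVec n k] := by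
    refine LinearIndependent.pair_iff.2 fun s t hst => ?_
    have h0 := congrFun hst ⟨0, by omega⟩
    have h1 := congrFun hst ⟨1, by omega⟩
    simp only [Fin.mk_zero', Pi.add_apply, Pi.smul_apply, cosVec, Fin.coe_ofNat_eq_mod,
      Nat.zero_mod, CharP.cast_eq_zero, mul_zero, Real.cos_zero, smul_eq_mul, mul_one, sinVec,
      Real.sin_zero, add_zero, Pi.zero_apply, Nat.cast_one] at h0 h1
    simp only [h0, zero_mul, zero_add, mul_eq_zero, hsin, or_false] at h1
    exact ⟨h0, h1⟩
  rw [modeSpace, ← Matrix.range_cons_cons_empty _ _ ![], finrank_span_eq_card hli, Fintype.card_fin]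

lemma finrank_modeSpace_of_eq {k : ℕ} (hk : 2 * k + 1 = n) :
    Module.finrank ℝ (modeSpace n k) = 1 := by
  have hsin : sinVec n k = 0 := by
    funext i
    have hn : (n : ℝ) ≠ 0 := by exact_mod_cast NeZero.ne n
    have hangle : modeAngle n k = π := by
      rw [modeAngle, show (2 * k + 1 : ℝ) = n by exact_mod_cast hk, mul_div_cancel_right₀ _ hn]
    simpa [sinVec, hangle, mul_comm] using Real.sin_nat_mul_pi i
  have hcos : cosVec n k ≠ 0 := fun h => by
    simpa [cosVec] using congrFun h ⟨0, Nat.pos_of_ne_zero (NeZero.ne n)⟩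
  rw [modeSpace, hsin, Set.pair_comm, Submodule.span_insert_zero, finrank_span_singleton hcos]

end Modes

section ModeFrequencies

variable {n : ℕ}

lemma freqCoeff_eq_zero_of_two_modes (hn : 0 < n) {ζ : ℤ → ℝ} {m μ : ℤ} (a b : ℂ)
    (hζ : ∀ t : ℕ, (ζ t : ℂ) = a * rootNegOne n ^ (m * t) + b * rootNegOne n ^ (-m * t))
    (hplus : ¬ (2 * n : ℤ) ∣ μ + m) (hminus : ¬ (2 * n : ℤ) ∣ μ - m) : freqCoeff n μ ζ = 0 := by
  have hsplit : ∀ t : ℕ, (a * rootNegOne n ^ (m * t) + b * rootNegOne n ^ (-m * t))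
      * rootNegOne n ^ (μ * t)
      = a * rootNegOne n ^ ((μ + m) * t) + b * rootNegOne n ^ ((μ - m) * t) := by
    intro t
    simp only [add_mul, sub_eq_add_neg, zpow_add₀ (rootNegOne_ne_zero n), neg_mul]
    ring
  simp only [freqCoeff, LinearMap.coe_mk, AddHom.coe_mk, hζ, hsplit]
  rw [sum_add_distrib, ← mul_sum, ← mul_sum, sum_range_rootNegOne_zpow_eq_zero hn hplus,
    sum_range_rootNegOne_zpow_eq_zero hn hminus, mul_zero, mul_zero, add_zero]

lemma ofReal_modeAngle_mul_mul_I (k : ℕ) (t : ℤ) :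
    ((modeAngle n k * t : ℝ) : ℂ) * I = ((2 * k + 1) * t : ℤ) * (π * I / n) := by
  simp only [modeAngle]
  push_cast
  ring

lemma ofReal_cos_modeAngle_mul (k : ℕ) (t : ℤ) : (Real.cos (modeAngle n k * t) : ℂ)
    = 1 / 2 * rootNegOne n ^ ((2 * k + 1) * t) + 1 / 2 * rootNegOne n ^ (-(2 * k + 1) * t) := by
  rw [rootNegOne_zpow, rootNegOne_zpow, ofReal_cos, Complex.cos, neg_mul,
    ofReal_modeAngle_mul_mul_I]
  push_cast
  ring_nf

lemma ofReal_sin_modeAngle_mul (k : ℕ) (t : ℤ) : (Real.sin (modeAngle n k * t) : ℂ)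
    = -I / 2 * rootNegOne n ^ ((2 * k + 1) * t) + I / 2 * rootNegOne n ^ (-(2 * k + 1) * t) := by
  rw [rootNegOne_zpow, rootNegOne_zpow, ofReal_sin, Complex.sin, neg_mul,
    ofReal_modeAngle_mul_mul_I]
  push_cast
  ring_nf

variable [NeZero n]

lemma modeSpace_le_vanishingFreq {k : ℕ} {B : Set ℤ}
    (hB : ∀ μ ∈ B, ¬ (2 * n : ℤ) ∣ μ + (2 * k + 1) ∧ ¬ (2 * n : ℤ) ∣ μ - (2 * k + 1)) :
    modeSpace n k ≤ vanishingFreq n B := by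
  have hn : 0 < n := Nat.pos_of_ne_zero (NeZero.ne n)
  rw [modeSpace, Submodule.span_le]
  rintro _ (rfl | rfl) <;> refine mem_vanishingFreq.2 fun μ hμ => ?_
  · exact freqCoeff_eq_zero_of_two_modes hn _ _
      (fun t => by rw [negacyclicExt_cosVec]; exact ofReal_cos_modeAngle_mul k t)
      (hB μ hμ).1 (hB μ hμ).2
  · exact freqCoeff_eq_zero_of_two_modes hn _ _
      (fun t => by rw [negacyclicExt_sinVec]; exact ofReal_sin_modeAngle_mul k t)
      (hB μ hμ).1 (hB μ hμ).2

lemma modeSpace_le_vanishingFreq_inf {i j k : ℕ} (hik : i ≤ k) (hkj : k ≤ j) (hj : 2 * j + 1 ≤ n) :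
    modeSpace n k ≤ vanishingFreq n {μ | |μ| < 2 * i + 1}
      ⊓ vanishingFreq n {μ | |μ - n| < (n - (2 * j + 1) : ℕ)} := by
  have hnd : ∀ s : ℤ, s ≠ 0 → -(2 * n) < s → s < 2 * n → ¬ (2 * n : ℤ) ∣ s :=
    fun s hs h1 h2 hd => hs (Int.eq_zero_of_abs_lt_dvd hd (abs_lt.2 ⟨h1, h2⟩))
  refine le_inf (modeSpace_le_vanishingFreq fun μ hμ => ?_)
    (modeSpace_le_vanishingFreq fun μ hμ => ?_)
  · replace hμ : -(2 * i + 1 : ℤ) < μ ∧ μ < 2 * i + 1 := abs_lt.1 hμ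
    exact ⟨hnd _ (by omega) (by omega) (by omega), hnd _ (by omega) (by omega) (by omega)⟩
  · replace hμ : -((n - (2 * j + 1) : ℕ) : ℤ) < μ - n ∧ μ - n < (n - (2 * j + 1) : ℕ) :=
      abs_lt.1 hμ
    rw [Nat.cast_sub hj] at hμ
    push_cast at hμ
    exact ⟨hnd _ (by omega) (by omega) (by omega), hnd _ (by omega) (by omega) (by omega)⟩

end ModeFrequencies

section Limits

lemma eventually_nhds_mul_nonneg {ι : Type*} [Finite ι] (ξ : ι → ℝ) :
    ∀ᶠ y in 𝓝 ξ, ∀ i, 0 ≤ ξ i * y i := by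
  refine eventually_all.2 fun i => ?_
  rcases eq_or_ne (ξ i) 0 with h | h
  · simp [h]
  · have hlim : Tendsto (fun y : ι → ℝ => ξ i * y i) (𝓝 ξ) (𝓝 (ξ i * ξ i)) :=
      ((continuous_apply i).tendsto ξ).const_mul _
    exact (hlim.eventually_const_lt (mul_self_pos.2 h)).mono fun _ hy => hy.le

variable {n : ℕ} [NeZero n]

lemma cyclicN_congr {y z : Fin n → ℝ} (h : ∀ i, 0 < y i * z i) : cyclicN n y = cyclicN n z := by
  refine Nat.card_congr (Equiv.subtypeEquivRight fun i => neg_iff_neg_of_mul_pos ?_)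
  have hδ : cyclicDelta n i * cyclicDelta n i = 1 := by unfold cyclicDelta; split_ifs <;> norm_num
  have key : cyclicDelta n i * y i * y (i - 1) * (cyclicDelta n i * z i * z (i - 1))
      = (y i * z i) * (y (i - 1) * z (i - 1)) := by
    linear_combination (y i * z i) * (y (i - 1) * z (i - 1)) * hδ
  rw [key]
  exact mul_pos (h i) (h (i - 1))

lemma cyclicN_le (y : Fin n → ℝ) : cyclicN n y ≤ n :=
  (Finite.card_subtype_le _).trans (Nat.card_fin n).le

lemma exists_frequently_cyclicN_eq (ξ : Fin n → ℝ) :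
    ∃ k, ∃ᶠ y in 𝓝[cyclicLambda n] ξ, cyclicN n y = k := by
  classical
  let φ : ℝ → Fin n → ℝ := fun ε i => if ξ i = 0 then ε else ξ i
  have hφ : Continuous φ := continuous_pi fun i => by
    by_cases h : ξ i = 0 <;> simp only [φ, h, if_true, if_false]
    exacts [continuous_id, continuous_const]
  have hφ0 : φ 0 = ξ := funext fun i => by by_cases h : ξ i = 0 <;> simp [φ, h]
  have hlim : Tendsto φ (𝓝[>] 0) (𝓝[cyclicLambda n] ξ) := by
    refine tendsto_nhdsWithin_iff.2 ⟨hφ0 ▸ hφ.continuousAt.mono_left nhdsWithin_le_nhds, ?_⟩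
    filter_upwards [self_mem_nhdsWithin] with ε (hε : 0 < ε) i
    by_cases h : ξ i = 0 <;> simp [φ, h, hε.ne']
  have hconst : ∀ ε ∈ Set.Ioi (0 : ℝ), cyclicN n (φ ε) = cyclicN n (φ 1) := fun ε hε =>
    cyclicN_congr fun i => by by_cases h : ξ i = 0 <;> simp [φ, h, Set.mem_Ioi.1 hε, mul_self_pos]
  exact ⟨_, hlim.frequently (eventually_nhdsWithin_of_forall hconst).frequently⟩

lemma exists_of_frequently_cyclicN_eq {ξ : Fin n → ℝ} {k : ℕ}
    (h : ∃ᶠ y in 𝓝[cyclicLambda n] ξ, cyclicN n y = k) :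
    ∃ y ∈ cyclicLambda n, (∀ i, 0 ≤ ξ i * y i) ∧ cyclicN n y = k := by
  obtain ⟨y, ⟨hyk, hξy⟩, hy⟩ := ((h.and_eventually (eventually_nhdsWithin_of_eventually_nhds
    (eventually_nhds_mul_nonneg ξ))).and_eventually self_mem_nhdsWithin).exists
  exact ⟨y, hy, hξy, hyk⟩

lemma cyclicNm_le_cyclicNM (ξ : Fin n → ℝ) : cyclicNm n ξ ≤ cyclicNM n ξ :=
  csInf_le_csSup (exists_frequently_cyclicN_eq ξ) (OrderBot.bddBelow _) ⟨n, fun _ hk => by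
    obtain ⟨y, hy⟩ := hk.exists
    exact hy ▸ cyclicN_le y⟩

variable {a : ℕ} {ξ : Fin n → ℝ}

lemma le_cyclicNm_of_forall
    (h : ∀ y ∈ cyclicLambda n, (∀ i, 0 ≤ ξ i * y i) → a ≤ cyclicN n y) : a ≤ cyclicNm n ξ :=
  le_csInf (exists_frequently_cyclicN_eq ξ) fun _ hk => by
    obtain ⟨y, hy, hξy, rfl⟩ := exists_of_frequently_cyclicN_eq hk
    exact h y hy hξy

lemma cyclicNM_le_of_forall
    (h : ∀ y ∈ cyclicLambda n, (∀ i, 0 ≤ ξ i * y i) → cyclicN n y ≤ a) : cyclicNM n ξ ≤ a :=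
  csSup_le (exists_frequently_cyclicN_eq ξ) fun _ hk => by
    obtain ⟨y, hy, hξy, rfl⟩ := exists_of_frequently_cyclicN_eq hk
    exact h y hy hξy

end Limits

theorem le_cyclicNm_and_cyclicNM_le {n : ℕ} [NeZero n] {i j : ℕ} (hj : 2 * j + 1 ≤ n)
    {ξ : Fin n → ℝ} (hξ : ξ ∈ vanishingFreq n {μ | |μ| < 2 * i + 1}
      ⊓ vanishingFreq n {μ | |μ - n| < (n - (2 * j + 1) : ℕ)}) (hξ0 : ξ ≠ 0) :
    2 * i + 1 ≤ cyclicNm n ξ ∧ cyclicNM n ξ ≤ 2 * j + 1 := by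
  refine ⟨le_cyclicNm_of_forall fun y hy hξy => ?_, cyclicNM_le_of_forall fun y hy hξy => ?_⟩
  · exact_mod_cast
      le_cyclicN_of_mem_vanishingFreq (d := 2 * i + 1) (by exact_mod_cast hξ.1) hξ0 hy hξy
  · have := cyclicN_add_le_of_mem_vanishingFreq hξ.2 hξ0 hy hξy
    omega

lemma finrank_modeSpace {n : ℕ} [NeZero n] {k : ℕ} (hk : 2 * k + 1 ≤ n) :
    Module.finrank ℝ (modeSpace n k) = if 2 * k + 1 = n then 1 else 2 := by
  split_ifs with h
  exacts [finrank_modeSpace_of_eq h, finrank_modeSpace_of_lt (lt_of_le_of_ne hk h)]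

lemma two_mul_add_one_le_of_lt_ntilde {n k : ℕ} (hk : k < (ntilde n + 1) / 2) : 2 * k + 1 ≤ n := by
  unfold ntilde at hk
  split_ifs at hk <;> omega

lemma two_mul_add_one_eq_iff_of_lt_ntilde {n k : ℕ} (hk : k < (ntilde n + 1) / 2) :
    2 * k + 1 = n ↔ k + 1 = (ntilde n + 1) / 2 ∧ n % 2 = 1 := by
  unfold ntilde at *
  split_ifs at * <;> omega

theorem stmt11_general (n : ℕ) [NeZero n] :
    ∃ E : Fin ((ntilde n + 1) / 2) → Submodule ℝ (Fin n → ℝ),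
      (∀ k, Module.finrank ℝ (E k) =
        if (k : ℕ) + 1 = (ntilde n + 1) / 2 then (if n % 2 = 1 then 1 else 2)
        else 2) ∧
      (∀ k, ∀ x ∈ E k, (Amat n).mulVec x ∈ E k) ∧
      (∀ k, ∀ ξ ∈ E k, ξ ≠ 0 →
        ξ ∈ cyclicGood n ∧ cyclicNm n ξ = 2 * (k : ℕ) + 1) ∧
      (∀ i j : Fin ((ntilde n + 1) / 2), i ≤ j →
        ∀ ξ ∈ (⨆ k ∈ Set.Icc i j, E k), ξ ≠ 0 →
          2 * (i : ℕ) + 1 ≤ cyclicNm n ξ ∧ cyclicNM n ξ ≤ 2 * (j : ℕ) + 1) := by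
  refine ⟨fun k => modeSpace n k, fun k => ?_, fun k x hx => mulVec_Amat_mem_modeSpace hx,
    fun k ξ hξ hξ0 => ?_, fun i j _ ξ hξ hξ0 => ?_⟩
  · have hlast := two_mul_add_one_eq_iff_of_lt_ntilde k.isLt
    rw [finrank_modeSpace (two_mul_add_one_le_of_lt_ntilde k.isLt)]
    split_ifs <;> tauto
  · have hk := two_mul_add_one_le_of_lt_ntilde k.isLt
    have hbounds := le_cyclicNm_and_cyclicNM_le hk
      (modeSpace_le_vanishingFreq_inf le_rfl le_rfl hk hξ) hξ0
    have hle := cyclicNm_le_cyclicNM ξ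
    exact ⟨show cyclicNm n ξ = cyclicNM n ξ by omega, by omega⟩
  · have hj := two_mul_add_one_le_of_lt_ntilde j.isLt
    exact le_cyclicNm_and_cyclicNM_le hj
      ((iSup₂_le fun k hk => modeSpace_le_vanishingFreq_inf hk.1 hk.2 hj) hξ) hξ0

/-- There are `(ñ+1)/2` `A`-invariant subspaces `E_k`, of
dimension `2` except the last one which has dimension `2` if `n` is even and
`1` if `n` is odd, such that every nonzero `ξ ∈ E_k` lies in `𝒩` with
`N(ξ) = 2k − 1`; moreover for `i ≤ j`, every nonzero vector of
`W_{i,j} = E_i ⊕ ⋯ ⊕ E_j` satisfies `2i − 1 ≤ N_m ≤ N_M ≤ 2j − 1`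
(here `k : Fin ((ñ+1)/2)` corresponds to the paper's index `k.val + 1`). -/
theorem stmt11 (n : ℕ) [NeZero n] (hn : 2 ≤ n) :
    ∃ E : Fin ((ntilde n + 1) / 2) → Submodule ℝ (Fin n → ℝ),
      (∀ k, Module.finrank ℝ (E k) =
        if (k : ℕ) + 1 = (ntilde n + 1) / 2 then (if n % 2 = 1 then 1 else 2)
        else 2) ∧
      (∀ k, ∀ x ∈ E k, (Amat n).mulVec x ∈ E k) ∧
      (∀ k, ∀ ξ ∈ E k, ξ ≠ 0 →
        ξ ∈ cyclicGood n ∧ cyclicNm n ξ = 2 * (k : ℕ) + 1) ∧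
      (∀ i j : Fin ((ntilde n + 1) / 2), i ≤ j →
        ∀ ξ ∈ (⨆ k ∈ Set.Icc i j, E k), ξ ≠ 0 →
          2 * (i : ℕ) + 1 ≤ cyclicNm n ξ ∧ cyclicNM n ξ ≤ 2 * (j : ℕ) + 1) :=
  stmt11_general n
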